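/- arXiv:math/0503165 — 4 statements merged into one kernel-verified Lean document; each statement's English description precedes it below -/
import Mathlib

section
/- Let H be a separable Hilbert space and K : C_b(H) → C_b(H) a bounded linear operator such that ‖Kf‖_∞ ≤ A‖f‖_∞ for all bounded continuous f, and such that there exists v ∈ H with ‖Kf‖_∞ ≤ B‖D_v f‖_∞ whenever the directional derivative D_v f exists and is bounded continuous. Then for each α ∈ (0,1) there is a constant c₁ = c₁(α) such that ‖Kf‖_∞ ≤ c₁ |v|^α [f]_{C^α} B^α A^{1-α} for all f in the Hölder space C^α(H). -/
open Real Set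

lemma holder_cont {E : Type*} [NormedAddCommGroup E] {u : E → ℝ} {C α : ℝ} (hα : 0 < α)
    (h : ∀ x y, |u x - u y| ≤ C * ‖x - y‖ ^ α) : Continuous u := by
  rw [continuous_iff_continuousAt]
  intro x
  rw [ContinuousAt, tendsto_iff_dist_tendsto_zero]
  have hb : ∀ y, dist (u y) (u x) ≤ C * ‖y - x‖ ^ α := fun y => by
    rw [Real.dist_eq]; exact h y x
  apply squeeze_zero (fun y => dist_nonneg) hb
  have h1 : Filter.Tendsto (fun y : E => ‖y - x‖) (nhds x) (nhds 0) := tendsto_norm_sub_self x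
  have h2 : ContinuousAt (fun z : ℝ => z ^ α) 0 :=
    Real.continuousAt_rpow_const 0 α (Or.inr hα.le)
  have h3 : Filter.Tendsto (fun y : E => ‖y - x‖ ^ α) (nhds x) (nhds ((0:ℝ) ^ α)) :=
    h2.tendsto.comp h1
  rw [Real.zero_rpow hα.ne'] at h3
  have := h3.const_mul C
  simpa using this

/-- Lemma 3.1: interpolation bound for an operator dominated by sup norm and by
the sup norm of a directional derivative. -/
theorem stmt0 {H : Type*} [NormedAddCommGroup H] [InnerProductSpace ℝ H]
    [CompleteSpace H] [TopologicalSpace.SeparableSpace H]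
    (α : ℝ) (hα : α ∈ Set.Ioo (0:ℝ) 1) :
    ∃ c₁ : ℝ, 0 < c₁ ∧
      ∀ (A B : ℝ), 0 < A → 0 < B →
      ∀ K : (H → ℝ) → (H → ℝ), IsLinearMap ℝ K →
      (∀ (f : H → ℝ) (C : ℝ), Continuous f → (∀ x, |f x| ≤ C) →
        ∀ x, |K f x| ≤ A * C) →
      ∀ v : H,
      (∀ (f g : H → ℝ) (C : ℝ), Continuous f → (∃ Mf, ∀ x, |f x| ≤ Mf) →
        (∀ x, HasLineDerivAt ℝ f (g x) x v) → Continuous g → (∀ x, |g x| ≤ C) →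
        ∀ x, |K f x| ≤ B * C) →
      ∀ (f : H → ℝ) (Cf : ℝ), Continuous f → (∃ Mf, ∀ x, |f x| ≤ Mf) →
        0 ≤ Cf → (∀ x h, |f (x + h) - f x| ≤ Cf * ‖h‖ ^ α) →
        ∀ x, |K f x| ≤ c₁ * ‖v‖ ^ α * Cf * B ^ α * A ^ (1 - α) := by
  obtain ⟨hα0, hα1⟩ := hα
  refine ⟨2, by norm_num, ?_⟩
  intro A B hA hB K hK hKsup v hKder f Cf hfc ⟨Mf, hMf⟩ hCf hfholder x₀
  set t : ℝ := B / A with ht_def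
  have ht : 0 < t := div_pos hB hA
  -- the mollified function
  set ft : H → ℝ := fun x => (∫ s in (0:ℝ)..t, f (x + s • v)) / t with hft_def
  set g : H → ℝ := fun x => (f (x + t • v) - f x) / t with hg_def
  -- continuity of the path integrand
  have hpath : ∀ x : H, Continuous fun s : ℝ => f (x + s • v) := fun x =>
    hfc.comp (continuous_const.add (continuous_id.smul continuous_const))
  have hintg : ∀ (x : H) (a b : ℝ),
      IntervalIntegrable (fun s : ℝ => f (x + s • v)) MeasureTheory.volume a b :=
    fun x a b => (hpath x).intervalIntegrable a b
  have hMf0 : 0 ≤ Mf := le_trans (abs_nonneg _) (hMf 0)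
  -- bound for f - ft
  have hdiff : ∀ x, |f x - ft x| ≤ Cf * (t * ‖v‖) ^ α := by
    intro x
    have key : f x - ft x = (∫ s in (0:ℝ)..t, (f x - f (x + s • v))) / t := by
      rw [intervalIntegral.integral_sub intervalIntegrable_const (hintg x 0 t),
        intervalIntegral.integral_const, smul_eq_mul, hft_def]
      field_simp
      ring
    rw [key, abs_div, abs_of_pos ht, div_le_iff₀ ht]
    have hbound : ∀ s ∈ Set.uIoc (0:ℝ) t, ‖f x - f (x + s • v)‖ ≤ Cf * (t * ‖v‖) ^ α := by
      intro s hs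
      rw [Set.uIoc_of_le ht.le] at hs
      obtain ⟨hs0, hst⟩ := hs
      have h1 : |f x - f (x + s • v)| ≤ Cf * ‖s • v‖ ^ α := by
        rw [abs_sub_comm]; exact hfholder x (s • v)
      refine h1.trans ?_
      apply mul_le_mul_of_nonneg_left _ hCf
      apply Real.rpow_le_rpow (norm_nonneg _) _ hα0.le
      rw [norm_smul, Real.norm_eq_abs, abs_of_pos hs0]
      exact mul_le_mul_of_nonneg_right hst (norm_nonneg v)
    have := intervalIntegral.norm_integral_le_of_norm_le_const hbound
    simpa [abs_of_pos ht] using this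
  -- ft is bounded
  have hftb : ∀ x, |ft x| ≤ Mf := by
    intro x
    have hbound : ∀ s ∈ Set.uIoc (0:ℝ) t, ‖f (x + s • v)‖ ≤ Mf := fun s _ => hMf _
    have h2 := intervalIntegral.norm_integral_le_of_norm_le_const hbound
    simp only [Real.norm_eq_abs, sub_zero, abs_of_pos ht] at h2
    rw [hft_def]
    simp only [abs_div, abs_of_pos ht]
    rw [div_le_iff₀ ht]
    exact h2
  -- ft is Hölder, hence continuous
  have hfth : ∀ x y, |ft x - ft y| ≤ Cf * ‖x - y‖ ^ α := by
    intro x y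
    have key : ft x - ft y = (∫ s in (0:ℝ)..t, (f (x + s • v) - f (y + s • v))) / t := by
      rw [intervalIntegral.integral_sub (hintg x 0 t) (hintg y 0 t), hft_def]
      ring
    rw [key, abs_div, abs_of_pos ht, div_le_iff₀ ht]
    have hbound : ∀ s ∈ Set.uIoc (0:ℝ) t, ‖f (x + s • v) - f (y + s • v)‖ ≤ Cf * ‖x - y‖ ^ α := by
      intro s _
      have h1 := hfholder (y + s • v) (x - y)
      have h2 : y + s • v + (x - y) = x + s • v := by abel
      rw [h2] at h1
      exact h1
    have := intervalIntegral.norm_integral_le_of_norm_le_const hbound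
    simpa [abs_of_pos ht] using this
  have hftc : Continuous ft := holder_cont hα0 hfth
  -- ft has line derivative g
  have hder : ∀ x, HasLineDerivAt ℝ ft (g x) x v := by
    intro x
    show HasDerivAt (fun τ : ℝ => ft (x + τ • v)) (g x) 0
    set F : ℝ → ℝ := fun u => ∫ s in (0:ℝ)..u, f (x + s • v) with hF_def
    have hFderiv : ∀ u : ℝ, HasDerivAt F (f (x + u • v)) u := fun u =>
      intervalIntegral.integral_hasDerivAt_right (hintg x 0 u)
        ((hpath x).stronglyMeasurableAtFilter _ _) (hpath x).continuousAt
    have heq : ∀ τ : ℝ, ft (x + τ • v) = (F (t + τ) - F τ) / t := by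
      intro τ
      have h1 : (fun s : ℝ => f (x + τ • v + s • v)) = fun s : ℝ => f (x + (s + τ) • v) := by
        funext s
        congr 1
        rw [add_smul]
        abel
      rw [hft_def]
      simp only [h1]
      congr 1
      have h3 : (∫ s in (0:ℝ)..t, f (x + (s + τ) • v)) = ∫ s in τ..(t + τ), f (x + s • v) := by
        have := intervalIntegral.integral_comp_add_right (fun s : ℝ => f (x + s • v)) τ
          (a := 0) (b := t)
        simpa using this
      rw [h3]
      have h2 := intervalIntegral.integral_add_adjacent_intervals (μ := MeasureTheory.volume)
        (hintg x 0 τ) (hintg x τ (t + τ))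
      rw [hF_def]
      simp only
      linarith [h2]
    have hG : HasDerivAt (fun τ : ℝ => (F (t + τ) - F τ) / t)
        ((f (x + t • v) - f (x + (0:ℝ) • v)) / t) 0 := by
      have hb : HasDerivAt (fun τ : ℝ => t + τ) 1 0 := (hasDerivAt_id 0).const_add t
      have ha : HasDerivAt (fun τ : ℝ => F (t + τ)) (f (x + t • v)) 0 := by
        have := (hFderiv (t + 0)).comp 0 hb
        simp only [add_zero, mul_one] at this
        exact this
      exact (ha.sub (hFderiv 0)).div_const t
    have hG' : HasDerivAt (fun τ : ℝ => ft (x + τ • v))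
        ((f (x + t • v) - f (x + (0:ℝ) • v)) / t) 0 := by
      apply hG.congr_of_eventuallyEq
      filter_upwards with τ
      exact heq τ
    simpa [hg_def] using hG'
  -- g is continuous and bounded
  have hgc : Continuous g := by
    apply Continuous.div_const
    exact (hfc.comp (continuous_id.add continuous_const)).sub hfc
  have hgb : ∀ x, |g x| ≤ Cf * (t * ‖v‖) ^ α / t := by
    intro x
    rw [hg_def]
    simp only [abs_div, abs_of_pos ht]
    gcongr
    have := hfholder x (t • v)
    rwa [norm_smul, Real.norm_eq_abs, abs_of_pos ht] at this
  -- split K f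
  have hfun : f = (fun x => f x - ft x) + ft := by funext x; simp
  have hsplit : K f x₀ = K (fun x => f x - ft x) x₀ + K ft x₀ := by
    conv_lhs => rw [hfun]
    rw [hK.map_add]
    simp
  have hb1 : |K (fun x => f x - ft x) x₀| ≤ A * (Cf * (t * ‖v‖) ^ α) :=
    hKsup _ _ (hfc.sub hftc) hdiff x₀
  have hb2 : |K ft x₀| ≤ B * (Cf * (t * ‖v‖) ^ α / t) :=
    hKder ft g _ hftc ⟨Mf, hftb⟩ hder hgc hgb x₀
  have halg : A * (Cf * (t * ‖v‖) ^ α) + B * (Cf * (t * ‖v‖) ^ α / t)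
      = 2 * ‖v‖ ^ α * Cf * B ^ α * A ^ (1 - α) := by
    have h1 : (t * ‖v‖) ^ α = t ^ α * ‖v‖ ^ α := Real.mul_rpow ht.le (norm_nonneg v)
    have h2 : t ^ α = B ^ α / A ^ α := by rw [ht_def, Real.div_rpow hB.le hA.le]
    have h3 : A ^ (1 - α) = A / A ^ α := by rw [Real.rpow_sub hA, Real.rpow_one]
    have hAα : (0:ℝ) < A ^ α := Real.rpow_pos_of_pos hA α
    rw [h1, h2, h3, ht_def]
    field_simp
    ring
  calc |K f x₀| = |K (fun x => f x - ft x) x₀ + K ft x₀| := by rw [hsplit]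
    _ ≤ |K (fun x => f x - ft x) x₀| + |K ft x₀| := abs_add_le _ _
    _ ≤ A * (Cf * (t * ‖v‖) ^ α) + B * (Cf * (t * ‖v‖) ^ α / t) := add_le_add hb1 hb2
    _ = 2 * ‖v‖ ^ α * Cf * B ^ α * A ^ (1 - α) := halg
end

section
/- Let f ∈ C^α(H) with α ∈ (0,1), v ∈ H, and for ε > 0 define the one-dimensional mollification p_ε * f(x) = ∫_ℝ f(x + z v) p_ε(z) dz, where p_ε is the centered Gaussian density with variance ε. Then D_v(p_ε * f)(x) = -∫_ℝ f(x + z v) p_ε'(z) dz, this directional derivative is bounded continuous, and ‖D_v(p_ε * f)‖_∞ ≤ c₂ [f]_{C^α} |v|^α ε^{(α-1)/2}, where c₂ = ∫_ℝ |z|^{α+1} p₁(z) dz. -/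
open Real Set MeasureTheory

/-- The centered Gaussian density on `ℝ` with variance `ε`. -/
noncomputable def gaussDensity (ε z : ℝ) : ℝ :=
  (2 * Real.pi * ε) ^ (-(1:ℝ)/2) * Real.exp (-(z ^ 2) / (2 * ε))

lemma gaussDensity_nonneg {ε : ℝ} (hε : 0 ≤ ε) (z : ℝ) : 0 ≤ gaussDensity ε z := by
  unfold gaussDensity
  have : (0:ℝ) ≤ 2 * Real.pi * ε := by positivity
  positivity

lemma continuous_gaussDensity (ε : ℝ) : Continuous (gaussDensity ε) := by
  unfold gaussDensity
  fun_prop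

lemma hasDerivAt_gaussDensity {ε : ℝ} (hε : 0 < ε) (z : ℝ) :
    HasDerivAt (gaussDensity ε) (-(z/ε) * gaussDensity ε z) z := by
  have h1 : HasDerivAt (fun z : ℝ => -(z ^ 2) / (2 * ε)) (-(z/ε)) z := by
    have h := ((hasDerivAt_pow 2 z).neg).div_const (2 * ε)
    refine h.congr_deriv ?_
    norm_num
    field_simp
  have h2 := h1.exp
  have h3 := h2.const_mul ((2 * Real.pi * ε) ^ (-(1:ℝ)/2))
  refine h3.congr_deriv ?_
  unfold gaussDensity
  ring

lemma deriv_gaussDensity {ε : ℝ} (hε : 0 < ε) :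
    deriv (gaussDensity ε) = fun z => -(z/ε) * gaussDensity ε z :=
  funext fun z => (hasDerivAt_gaussDensity hε z).deriv

lemma continuous_deriv_gaussDensity {ε : ℝ} (hε : 0 < ε) :
    Continuous (deriv (gaussDensity ε)) := by
  rw [deriv_gaussDensity hε]
  exact ((continuous_id.div_const ε).neg).mul (continuous_gaussDensity ε)

lemma abs_deriv_gaussDensity {ε : ℝ} (hε : 0 < ε) (z : ℝ) :
    |deriv (gaussDensity ε) z| = |z| / ε * gaussDensity ε z := by
  rw [deriv_gaussDensity hε]
  rw [abs_mul, abs_of_nonneg (gaussDensity_nonneg hε.le z), abs_neg, abs_div,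
    abs_of_pos hε]

lemma integrable_abs_rpow_mul_exp {b s : ℝ} (hb : 0 < b) (hs0 : 0 ≤ s) (hs2 : s ≤ 2) :
    Integrable fun z : ℝ => |z| ^ s * Real.exp (-b * z ^ 2) := by
  have h2 : Integrable fun z : ℝ => (1 + z ^ 2) * Real.exp (-b * z ^ 2) := by
    have ha := integrable_exp_neg_mul_sq hb
    have hb2 : Integrable fun z : ℝ => z ^ 2 * Real.exp (-b * z ^ 2) := by
      have h := integrable_rpow_mul_exp_neg_mul_sq hb (show (-1:ℝ) < 2 by norm_num)
      simpa [Real.rpow_two] using h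
    simpa [add_mul, one_mul, Pi.add_def] using ha.add hb2
  refine h2.mono' ?_ ?_
  · exact ((continuous_abs.rpow_const fun x => Or.inr hs0).mul
      (Real.continuous_exp.comp (by fun_prop))).aestronglyMeasurable
  · filter_upwards with z
    have he : (0:ℝ) < Real.exp (-b * z ^ 2) := Real.exp_pos _
    have h1 : |z| ^ s ≤ 1 + z ^ 2 := by
      rcases le_total |z| 1 with h | h
      · have := Real.rpow_le_one (abs_nonneg z) h hs0
        nlinarith [sq_nonneg z]
      · have h2' : |z| ^ s ≤ |z| ^ (2:ℝ) := Real.rpow_le_rpow_of_exponent_le h hs2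
        rw [Real.rpow_two, sq_abs] at h2'
        linarith
    have hn : ‖|z| ^ s * Real.exp (-b * z ^ 2)‖ = |z| ^ s * Real.exp (-b * z ^ 2) := by
      rw [Real.norm_eq_abs, abs_of_nonneg (by positivity)]
    rw [hn]
    exact mul_le_mul_of_nonneg_right h1 he.le

lemma integrable_abs_rpow_mul_gaussDensity {ε : ℝ} (hε : 0 < ε) {s : ℝ}
    (hs0 : 0 ≤ s) (hs2 : s ≤ 2) :
    Integrable fun z : ℝ => |z| ^ s * gaussDensity ε z := by
  have hb : (0:ℝ) < (2 * ε)⁻¹ := by positivity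
  have h := (integrable_abs_rpow_mul_exp hb hs0 hs2).const_mul ((2 * Real.pi * ε) ^ (-(1:ℝ)/2))
  refine h.congr ?_
  filter_upwards with z
  unfold gaussDensity
  rw [show -(z ^ 2) / (2 * ε) = -(2 * ε)⁻¹ * z ^ 2 by field_simp]
  ring

lemma integrable_gaussDensity {ε : ℝ} (hε : 0 < ε) : Integrable (gaussDensity ε) := by
  have := integrable_abs_rpow_mul_gaussDensity hε le_rfl (by norm_num : (0:ℝ) ≤ 2)
  simpa [Real.rpow_zero] using this

lemma integrable_abs_mul_gaussDensity {ε : ℝ} (hε : 0 < ε) :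
    Integrable fun z : ℝ => |z| * gaussDensity ε z := by
  simpa [Real.rpow_one] using
    integrable_abs_rpow_mul_gaussDensity hε zero_le_one one_le_two

lemma integrable_deriv_gaussDensity {ε : ℝ} (hε : 0 < ε) :
    Integrable (deriv (gaussDensity ε)) := by
  rw [deriv_gaussDensity hε]
  refine ((integrable_abs_mul_gaussDensity hε).const_mul ε⁻¹).mono' ?_ ?_
  · exact (((continuous_id.div_const ε).neg).mul
      (continuous_gaussDensity ε)).aestronglyMeasurable
  · filter_upwards with z
    rw [Real.norm_eq_abs, abs_mul, abs_neg, abs_div, abs_of_pos hε]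
    rw [abs_of_nonneg (gaussDensity_nonneg hε.le z)]
    rw [div_eq_inv_mul, mul_assoc]

lemma moment_gaussDensity {ε : ℝ} (hε : 0 < ε) (s : ℝ) :
    ∫ z : ℝ, |z| ^ s * gaussDensity ε z
      = ε ^ (s / 2) * ∫ z : ℝ, |z| ^ s * gaussDensity 1 z := by
  have h0 : (0:ℝ) < Real.sqrt ε := Real.sqrt_pos.2 hε
  have hpt : ∀ x : ℝ, |Real.sqrt ε * x| ^ s * gaussDensity ε (Real.sqrt ε * x)
      = (Real.sqrt ε ^ s * ε ^ (-(1:ℝ)/2)) * (|x| ^ s * gaussDensity 1 x) := by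
    intro x
    unfold gaussDensity
    rw [abs_mul, abs_of_pos h0, Real.mul_rpow h0.le (abs_nonneg x),
      Real.mul_rpow (by positivity : (0:ℝ) ≤ 2 * Real.pi) hε.le,
      mul_pow, Real.sq_sqrt hε.le,
      show -(ε * x ^ 2) / (2 * ε) = -(x ^ 2) / (2 * 1) by
        rw [mul_one, neg_div, neg_div]; congr 1
        field_simp]
    rw [mul_one]
    ring
  have key := MeasureTheory.Measure.integral_comp_mul_left
    (fun z : ℝ => |z| ^ s * gaussDensity ε z) (Real.sqrt ε)
  simp only [hpt] at key
  rw [MeasureTheory.integral_const_mul, smul_eq_mul,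
    abs_of_pos (inv_pos.2 h0)] at key
  have hM : ∫ z : ℝ, |z| ^ s * gaussDensity ε z
      = Real.sqrt ε * ((Real.sqrt ε ^ s * ε ^ (-(1:ℝ)/2))
          * ∫ z : ℝ, |z| ^ s * gaussDensity 1 z) := by
    rw [key]
    field_simp
  rw [hM, Real.sqrt_eq_rpow, ← Real.rpow_mul hε.le, ← mul_assoc, ← mul_assoc,
    ← Real.rpow_add hε, ← Real.rpow_add hε]
  congr 2
  ring

lemma integral_deriv_gaussDensity {ε : ℝ} (hε : 0 < ε) :
    ∫ z : ℝ, deriv (gaussDensity ε) z = 0 := by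
  have h1 : ∫ z : ℝ, deriv (gaussDensity ε) (-z) = ∫ z : ℝ, deriv (gaussDensity ε) z :=
    integral_neg_eq_self _ volume
  have h2 : ∀ z : ℝ, deriv (gaussDensity ε) (-z) = -deriv (gaussDensity ε) z := by
    intro z
    rw [deriv_gaussDensity hε]
    simp only [gaussDensity, neg_sq]
    ring
  simp_rw [h2] at h1
  rw [integral_neg] at h1
  linarith

/-- Mollification along a direction `v`: the directional derivative of `p_ε * f`
exists, is bounded continuous, and satisfies the stated bound. -/
theorem stmt1 {H : Type*} [NormedAddCommGroup H] [InnerProductSpace ℝ H]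
    [CompleteSpace H] [TopologicalSpace.SeparableSpace H]
    (α ε : ℝ) (hα : α ∈ Set.Ioo (0:ℝ) 1) (hε : 0 < ε) (v : H)
    (f : H → ℝ) (Cf Mf : ℝ) (hf : Continuous f) (hMf : ∀ x, |f x| ≤ Mf)
    (hCf : 0 ≤ Cf) (hHol : ∀ x h, |f (x + h) - f x| ≤ Cf * ‖h‖ ^ α) :
    (∀ x : H, HasLineDerivAt ℝ (fun y => ∫ z : ℝ, f (y + z • v) * gaussDensity ε z)
        (-∫ z : ℝ, f (x + z • v) * deriv (gaussDensity ε) z) x v) ∧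
    Continuous (fun x : H => -∫ z : ℝ, f (x + z • v) * deriv (gaussDensity ε) z) ∧
    ∀ x : H, |-∫ z : ℝ, f (x + z • v) * deriv (gaussDensity ε) z| ≤
      (∫ z : ℝ, |z| ^ (α + 1) * gaussDensity 1 z) * Cf * ‖v‖ ^ α * ε ^ ((α - 1) / 2) := by
  obtain ⟨hα0, hα1⟩ := hα
  have hMf0 : 0 ≤ Mf := le_trans (abs_nonneg _) (hMf 0)
  have hcont_z : ∀ x : H, Continuous fun z : ℝ => f (x + z • v) :=
    fun x => hf.comp (continuous_const.add (continuous_id.smul continuous_const))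
  have hbdd : ∀ x : H, ∃ C, ∀ z : ℝ, ‖f (x + z • v)‖ ≤ C :=
    fun x => ⟨Mf, fun z => by simpa [Real.norm_eq_abs] using hMf (x + z • v)⟩
  have hint1 : ∀ x : H, Integrable fun z : ℝ => f (x + z • v) * gaussDensity ε z :=
    fun x => Integrable.bdd_mul (integrable_gaussDensity hε)
      (hcont_z x).aestronglyMeasurable (Filter.Eventually.of_forall (hbdd x).choose_spec)
  have hint2 : ∀ x : H, Integrable fun z : ℝ => f (x + z • v) * deriv (gaussDensity ε) z :=
    fun x => Integrable.bdd_mul (integrable_deriv_gaussDensity hε)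
      (hcont_z x).aestronglyMeasurable (Filter.Eventually.of_forall (hbdd x).choose_spec)
  refine ⟨?_, ?_, ?_⟩
  · -- Part 1: the line derivative
    intro x
    have harg : ∀ t z : ℝ, x + t • v + z • v = x + (z + t) • v := by
      intro t z; rw [add_smul]; abel
    have heq : ∀ t : ℝ, (∫ z : ℝ, f (x + t • v + z • v) * gaussDensity ε z)
        = ∫ z : ℝ, f (x + z • v) * gaussDensity ε (z - t) := by
      intro t
      rw [← MeasureTheory.integral_add_right_eq_self
        (fun z : ℝ => f (x + z • v) * gaussDensity ε (z - t)) t]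
      congr 1; funext z
      simp only [add_sub_cancel_right]
      rw [harg]
    show HasDerivAt (fun t : ℝ => ∫ z : ℝ, f (x + t • v + z • v) * gaussDensity ε z)
      (-∫ z : ℝ, f (x + z • v) * deriv (gaussDensity ε) z) 0
    rw [funext heq]
    have hb4 : (0:ℝ) < (4 * ε)⁻¹ := by positivity
    have bound_int : Integrable fun z : ℝ =>
        Mf * ((|z| + 1) / ε * ((2 * Real.pi * ε) ^ (-(1:ℝ)/2)
          * (Real.exp ((2 * ε)⁻¹) * Real.exp (-(4 * ε)⁻¹ * z ^ 2)))) := by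
      have h1 : Integrable fun z : ℝ => |z| * Real.exp (-(4 * ε)⁻¹ * z ^ 2) := by
        simpa [Real.rpow_one] using integrable_abs_rpow_mul_exp hb4 zero_le_one one_le_two
      have h2 := (h1.add (integrable_exp_neg_mul_sq hb4)).const_mul
        (Mf * ((2 * Real.pi * ε) ^ (-(1:ℝ)/2) * Real.exp ((2 * ε)⁻¹) / ε))
      refine h2.congr ?_
      filter_upwards with z
      simp only [Pi.add_apply]
      field_simp
    have key := hasDerivAt_integral_of_dominated_loc_of_deriv_le (μ := volume)
      (x₀ := (0:ℝ))
      (F := fun t z => f (x + z • v) * gaussDensity ε (z - t))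
      (F' := fun t z => -(f (x + z • v) * deriv (gaussDensity ε) (z - t)))
      (bound := fun z => Mf * ((|z| + 1) / ε * ((2 * Real.pi * ε) ^ (-(1:ℝ)/2)
          * (Real.exp ((2 * ε)⁻¹) * Real.exp (-(4 * ε)⁻¹ * z ^ 2)))))
      (Metric.ball_mem_nhds (0:ℝ) one_pos)
      (Filter.Eventually.of_forall fun t =>
        ((hcont_z x).mul ((continuous_gaussDensity ε).comp
          (continuous_id.sub continuous_const))).aestronglyMeasurable)
      (by simpa [sub_zero] using hint1 x)
      ((((hcont_z x).mul ((continuous_deriv_gaussDensity hε).comp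
          (continuous_id.sub continuous_const))).neg).aestronglyMeasurable)
      (Filter.Eventually.of_forall fun z => by
        intro t ht
        rw [mem_ball_zero_iff, Real.norm_eq_abs] at ht
        have ht2 : t ^ 2 ≤ 1 := by nlinarith [abs_nonneg t, sq_abs t]
        have hgd : gaussDensity ε (z - t) ≤ (2 * Real.pi * ε) ^ (-(1:ℝ)/2)
            * (Real.exp ((2 * ε)⁻¹) * Real.exp (-(4 * ε)⁻¹ * z ^ 2)) := by
          unfold gaussDensity
          rw [← Real.exp_add]
          gcongr
          have h3 : -((z - t) ^ 2) ≤ 1 - z ^ 2 / 2 := by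
            nlinarith [sq_nonneg (z - 2 * t)]
          have h4 : ((2:ℝ) * ε)⁻¹ + -(4 * ε)⁻¹ * z ^ 2
              = (1 - z ^ 2 / 2) / (2 * ε) := by
            field_simp
            ring
          rw [h4]
          exact (div_le_div_iff_of_pos_right (by positivity)).mpr h3
        calc ‖-(f (x + z • v) * deriv (gaussDensity ε) (z - t))‖
            = |f (x + z • v)| * (|z - t| / ε * gaussDensity ε (z - t)) := by
              rw [norm_neg, Real.norm_eq_abs, abs_mul, abs_deriv_gaussDensity hε]
          _ ≤ Mf * ((|z| + 1) / ε * ((2 * Real.pi * ε) ^ (-(1:ℝ)/2)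
              * (Real.exp ((2 * ε)⁻¹) * Real.exp (-(4 * ε)⁻¹ * z ^ 2)))) := by
              have h5 : |z - t| ≤ |z| + 1 := by
                rw [sub_eq_add_neg]
                refine (abs_add_le _ _).trans ?_
                rw [abs_neg]
                linarith
              exact mul_le_mul (hMf _)
                (mul_le_mul ((div_le_div_iff_of_pos_right hε).mpr h5) hgd
                  (gaussDensity_nonneg hε.le _) (by positivity))
                (mul_nonneg (by positivity) (gaussDensity_nonneg hε.le _)) hMf0)
      bound_int
      (Filter.Eventually.of_forall fun z => by
        intro t ht
        have h1 : HasDerivAt (fun t : ℝ => z - t) (-1) t := (hasDerivAt_id t).const_sub z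
        have h2 := (hasDerivAt_gaussDensity hε (z - t)).comp t h1
        have h2' : HasDerivAt (fun t : ℝ => gaussDensity ε (z - t))
            (-((z - t)/ε) * gaussDensity ε (z - t) * -1) t := h2
        have h3 := h2'.const_mul (f (x + z • v))
        refine h3.congr_deriv ?_
        rw [deriv_gaussDensity hε]
        ring)
    have hD := key.2
    have hval : (∫ z : ℝ, -(f (x + z • v) * deriv (gaussDensity ε) (z - 0)))
        = -∫ z : ℝ, f (x + z • v) * deriv (gaussDensity ε) z := by
      simp only [sub_zero]
      rw [integral_neg]
    rwa [hval] at hD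
  · -- Part 2: continuity
    refine Continuous.neg ?_
    rw [continuous_iff_continuousAt]
    intro x₀
    refine continuousAt_of_dominated ?_ ?_ ?_ ?_
      (bound := fun z => Mf * |deriv (gaussDensity ε) z|)
    · exact Filter.Eventually.of_forall fun x =>
        ((hcont_z x).mul (continuous_deriv_gaussDensity hε)).aestronglyMeasurable
    · refine Filter.Eventually.of_forall fun x =>
        Filter.Eventually.of_forall fun z => ?_
      rw [Real.norm_eq_abs, abs_mul]
      exact mul_le_mul_of_nonneg_right (hMf _) (abs_nonneg _)
    · exact ((integrable_deriv_gaussDensity hε).abs).const_mul Mf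
    · refine Filter.Eventually.of_forall fun z => ?_
      exact ((hf.comp (continuous_id.add continuous_const)).mul
        continuous_const).continuousAt
  · -- Part 3: the bound
    intro x
    have hintc : Integrable fun z : ℝ => f x * deriv (gaussDensity ε) z :=
      (integrable_deriv_gaussDensity hε).const_mul (f x)
    have hintsub : Integrable fun z : ℝ =>
        (f (x + z • v) - f x) * deriv (gaussDensity ε) z := by
      have h := (hint2 x).sub hintc
      refine h.congr ?_
      filter_upwards with z
      simp only [Pi.sub_apply]
      ring
    have hmaj : Integrable fun z : ℝ =>
        Cf * ‖v‖ ^ α * (ε⁻¹ * (|z| ^ (α + 1) * gaussDensity ε z)) :=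
      (((integrable_abs_rpow_mul_gaussDensity hε (by linarith) (by linarith)).const_mul
        ε⁻¹).const_mul (Cf * ‖v‖ ^ α))
    have step1 : (∫ z : ℝ, f (x + z • v) * deriv (gaussDensity ε) z)
        = ∫ z : ℝ, (f (x + z • v) - f x) * deriv (gaussDensity ε) z := by
      rw [show (fun z : ℝ => (f (x + z • v) - f x) * deriv (gaussDensity ε) z)
          = fun z : ℝ => f (x + z • v) * deriv (gaussDensity ε) z
              - f x * deriv (gaussDensity ε) z from funext fun z => by ring]
      rw [integral_sub (hint2 x) hintc, MeasureTheory.integral_const_mul,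
        integral_deriv_gaussDensity hε, mul_zero, sub_zero]
    have step2 : |∫ z : ℝ, (f (x + z • v) - f x) * deriv (gaussDensity ε) z|
        ≤ ∫ z : ℝ, Cf * ‖v‖ ^ α * (ε⁻¹ * (|z| ^ (α + 1) * gaussDensity ε z)) := by
      have h1 := norm_integral_le_integral_norm (μ := volume)
        (fun z : ℝ => (f (x + z • v) - f x) * deriv (gaussDensity ε) z)
      simp only [Real.norm_eq_abs] at h1
      refine h1.trans (integral_mono hintsub.abs hmaj ?_)
      intro z
      have hzz : |z| ^ α * |z| = |z| ^ (α + 1) := by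
        rcases eq_or_ne z 0 with rfl | hz
        · simp [Real.zero_rpow (by linarith : α + 1 ≠ 0), Real.zero_rpow hα0.ne']
        · rw [Real.rpow_add_one (abs_ne_zero.2 hz)]
      have hHol' : |f (x + z • v) - f x| ≤ Cf * (|z| ^ α * ‖v‖ ^ α) := by
        have h := hHol x (z • v)
        rwa [norm_smul, Real.norm_eq_abs,
          Real.mul_rpow (abs_nonneg z) (norm_nonneg v)] at h
      calc |(f (x + z • v) - f x) * deriv (gaussDensity ε) z|
          = |f (x + z • v) - f x| * (|z| / ε * gaussDensity ε z) := by
            rw [abs_mul, abs_deriv_gaussDensity hε]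
        _ ≤ (Cf * (|z| ^ α * ‖v‖ ^ α)) * (|z| / ε * gaussDensity ε z) :=
            mul_le_mul_of_nonneg_right hHol'
              (mul_nonneg (by positivity) (gaussDensity_nonneg hε.le z))
        _ = Cf * ‖v‖ ^ α * (ε⁻¹ * ((|z| ^ α * |z|) * gaussDensity ε z)) := by
            field_simp
        _ = Cf * ‖v‖ ^ α * (ε⁻¹ * (|z| ^ (α + 1) * gaussDensity ε z)) := by
            rw [hzz]
    have step3 : (∫ z : ℝ, Cf * ‖v‖ ^ α * (ε⁻¹ * (|z| ^ (α + 1) * gaussDensity ε z)))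
        = Cf * ‖v‖ ^ α * (ε⁻¹ * (ε ^ ((α + 1) / 2)
            * ∫ z : ℝ, |z| ^ (α + 1) * gaussDensity 1 z)) := by
      rw [MeasureTheory.integral_const_mul, MeasureTheory.integral_const_mul,
        moment_gaussDensity hε]
    have hpow : ε⁻¹ * ε ^ ((α + 1) / 2) = ε ^ ((α - 1) / 2) := by
      rw [← Real.rpow_neg_one, ← Real.rpow_add hε]
      congr 1
      ring
    calc |-∫ z : ℝ, f (x + z • v) * deriv (gaussDensity ε) z|
        = |∫ z : ℝ, (f (x + z • v) - f x) * deriv (gaussDensity ε) z| := by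
          rw [abs_neg, step1]
      _ ≤ ∫ z : ℝ, Cf * ‖v‖ ^ α * (ε⁻¹ * (|z| ^ (α + 1) * gaussDensity ε z)) := step2
      _ = Cf * ‖v‖ ^ α * ((ε⁻¹ * ε ^ ((α + 1) / 2))
            * ∫ z : ℝ, |z| ^ (α + 1) * gaussDensity 1 z) := by
          rw [step3]; ring
      _ = (∫ z : ℝ, |z| ^ (α + 1) * gaussDensity 1 z) * Cf * ‖v‖ ^ α
            * ε ^ ((α - 1) / 2) := by
          rw [hpow]; ring
end

section
/- Let M be a continuous martingale with M₀ = 0 and ⟨M⟩_t - ⟨M⟩_s ≤ c₁(t-s) for s ≤ t, let λ > 0, and set Z_t = ∫₀^t e^{-λ(t-s)} dM_s. Then for 0 ≤ s₀ < t₀, the quadratic variation of the martingale part K_t = (e^{-λ(t₀-s₀)} - 1) e^{-λ s₀} ∫₀^t e^{λ r} dM_r satisfies ⟨K⟩_{s₀} ≤ c₁ (1 ∧ λ(t₀ - s₀))/λ, and hence for every ε ∈ (0,1), ⟨K⟩_{s₀} ≤ c(ε) c₁ (t₀ - s₀)^ε / λ^{1-ε}. -/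
open Real Set MeasureTheory

lemma key_int (c₁ lam s₀ : ℝ) (hc₁ : 0 ≤ c₁) (hlam : 0 < lam) (hs₀ : 0 ≤ s₀)
    (ν : Measure ℝ)
    (hν : ∀ s t : ℝ, 0 ≤ s → s ≤ t → ν (Set.Icc s t) ≤ ENNReal.ofReal (c₁ * (t - s))) :
    ∫ r in Set.Ioc (0:ℝ) s₀, Real.exp (2 * lam * r) ∂ν ≤ Real.exp (2 * lam * s₀) * c₁ / lam := by
  set h : ℝ := 1 / (2 * lam) with hh
  have hhpos : 0 < h := by positivity
  have h2lh : 2 * lam * h = 1 := by rw [hh]; field_simp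
  have hcover : Set.Ioc (0:ℝ) s₀ ⊆ ⋃ k : ℕ, Set.Ioc (s₀ - (k+1)*h) (s₀ - k*h) := by
    intro r hr
    obtain ⟨hr0, hrs⟩ := hr
    refine Set.mem_iUnion.2 ⟨⌊(s₀ - r)/h⌋₊, ?_, ?_⟩
    · have h1 : (s₀ - r)/h < ⌊(s₀ - r)/h⌋₊ + 1 := Nat.lt_floor_add_one _
      have := (div_lt_iff₀ hhpos).1 h1
      linarith
    · have h0 : 0 ≤ (s₀ - r)/h := div_nonneg (by linarith) hhpos.le
      have h1 : (⌊(s₀ - r)/h⌋₊ : ℝ) ≤ (s₀ - r)/h := Nat.floor_le h0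
      have := (le_div_iff₀ hhpos).1 h1
      linarith
  have hpiece : ∀ k : ℕ,
      ∫⁻ r in Set.Ioc (s₀ - (k+1)*h) (s₀ - k*h) ∩ Set.Ioc 0 s₀,
        ENNReal.ofReal (Real.exp (2*lam*r)) ∂ν
      ≤ ENNReal.ofReal (Real.exp (2*lam*s₀) * c₁ * h) * ENNReal.ofReal (Real.exp (-1)) ^ k := by
    intro k
    set a : ℝ := max (s₀ - (k+1)*h) 0 with ha
    set b : ℝ := min (s₀ - k*h) s₀ with hb
    have hsub : Set.Ioc (s₀-(k+1)*h) (s₀-k*h) ∩ Set.Ioc 0 s₀ = Set.Ioc a b := Set.Ioc_inter_Ioc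
    have hmeas : ν (Set.Ioc a b) ≤ ENNReal.ofReal (c₁ * h) := by
      by_cases hab : a ≤ b
      · calc ν (Set.Ioc a b) ≤ ν (Set.Icc a b) := measure_mono Set.Ioc_subset_Icc_self
          _ ≤ ENNReal.ofReal (c₁ * (b - a)) := hν a b (le_max_right _ _) hab
          _ ≤ ENNReal.ofReal (c₁ * h) := by
              apply ENNReal.ofReal_le_ofReal
              have h1 : b ≤ s₀ - k*h := min_le_left _ _
              have h2 : s₀ - (k+1)*h ≤ a := le_max_left _ _
              have : b - a ≤ h := by push_cast at h1 h2 ⊢; nlinarith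
              nlinarith
      · rw [Set.Ioc_eq_empty (fun hlt => hab hlt.le), measure_empty]
        exact zero_le
    have hbk : Real.exp (2*lam*b) ≤ Real.exp (2*lam*s₀) * Real.exp (-1) ^ k := by
      have h1 : b ≤ s₀ - k*h := min_le_left _ _
      have h2 : 2*lam*b ≤ 2*lam*s₀ - k := by
        have : 2*lam*(k*h) = k := by rw [show 2*lam*(k*h) = (k:ℝ)*(2*lam*h) by ring, h2lh, mul_one]
        nlinarith
      calc Real.exp (2*lam*b) ≤ Real.exp (2*lam*s₀ - k) := Real.exp_le_exp.2 h2
        _ = Real.exp (2*lam*s₀) * Real.exp (-1) ^ k := by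
            rw [← Real.exp_nat_mul, ← Real.exp_add]
            congr 1
            ring
    rw [hsub]
    calc ∫⁻ r in Set.Ioc a b, ENNReal.ofReal (Real.exp (2*lam*r)) ∂ν
        ≤ ∫⁻ _ in Set.Ioc a b, ENNReal.ofReal (Real.exp (2*lam*b)) ∂ν := by
          apply setLIntegral_mono measurable_const
          intro x hx
          exact ENNReal.ofReal_le_ofReal (Real.exp_le_exp.2 (by nlinarith [hx.2]))
      _ = ENNReal.ofReal (Real.exp (2*lam*b)) * ν (Set.Ioc a b) := setLIntegral_const _ _
      _ ≤ ENNReal.ofReal (Real.exp (2*lam*b)) * ENNReal.ofReal (c₁ * h) := by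
          exact mul_le_mul_right hmeas _
      _ ≤ ENNReal.ofReal (Real.exp (2*lam*s₀) * c₁ * h) * ENNReal.ofReal (Real.exp (-1)) ^ k := by
          rw [← ENNReal.ofReal_pow (Real.exp_nonneg _), ← ENNReal.ofReal_mul (by positivity),
            ← ENNReal.ofReal_mul (by positivity)]
          apply ENNReal.ofReal_le_ofReal
          have := mul_le_mul_of_nonneg_right hbk (show (0:ℝ) ≤ c₁ * h by positivity)
          nlinarith [Real.exp_nonneg (2*lam*b), pow_nonneg (Real.exp_nonneg (-1)) k]
  have hmain : ∫⁻ r in Set.Ioc (0:ℝ) s₀, ENNReal.ofReal (Real.exp (2*lam*r)) ∂ν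
      ≤ ENNReal.ofReal (Real.exp (2*lam*s₀) * c₁ / lam) := by
    have heq : Set.Ioc (0:ℝ) s₀ = ⋃ k : ℕ, (Set.Ioc (s₀-(k+1)*h) (s₀-k*h) ∩ Set.Ioc 0 s₀) := by
      apply Set.Subset.antisymm
      · intro r hr
        rcases Set.mem_iUnion.1 (hcover hr) with ⟨k, hk⟩
        exact Set.mem_iUnion.2 ⟨k, hk, hr⟩
      · exact Set.iUnion_subset fun k => Set.inter_subset_right
    have hq1 : ENNReal.ofReal (Real.exp (-1)) < 1 := by
      rw [← ENNReal.ofReal_one]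
      exact ENNReal.ofReal_lt_ofReal_iff_of_nonneg (Real.exp_nonneg _) |>.2
        (Real.exp_lt_one_iff.2 (by norm_num))
    calc ∫⁻ r in Set.Ioc (0:ℝ) s₀, ENNReal.ofReal (Real.exp (2*lam*r)) ∂ν
        = ∫⁻ r in ⋃ k : ℕ, (Set.Ioc (s₀-(k+1)*h) (s₀-k*h) ∩ Set.Ioc 0 s₀),
            ENNReal.ofReal (Real.exp (2*lam*r)) ∂ν := by rw [← heq]
      _ ≤ ∑' k : ℕ, ∫⁻ r in Set.Ioc (s₀-(k+1)*h) (s₀-k*h) ∩ Set.Ioc 0 s₀,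
            ENNReal.ofReal (Real.exp (2*lam*r)) ∂ν := lintegral_iUnion_le _ _
      _ ≤ ∑' k : ℕ, ENNReal.ofReal (Real.exp (2*lam*s₀) * c₁ * h) * ENNReal.ofReal (Real.exp (-1)) ^ k :=
          ENNReal.tsum_le_tsum hpiece
      _ = ENNReal.ofReal (Real.exp (2*lam*s₀) * c₁ * h) * (1 - ENNReal.ofReal (Real.exp (-1)))⁻¹ := by
          rw [ENNReal.tsum_mul_left, ENNReal.tsum_geometric]
      _ ≤ ENNReal.ofReal (Real.exp (2*lam*s₀) * c₁ / lam) := by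
          have e1 : (1 : ENNReal) - ENNReal.ofReal (Real.exp (-1)) = ENNReal.ofReal (1 - Real.exp (-1)) := by
            rw [ENNReal.ofReal_sub _ (Real.exp_nonneg _), ENNReal.ofReal_one]
          have hpos : (0:ℝ) < 1 - Real.exp (-1) := by
            have := Real.exp_lt_one_iff.2 (show (-1:ℝ) < 0 by norm_num); linarith
          rw [e1, ← ENNReal.ofReal_inv_of_pos hpos, ← ENNReal.ofReal_mul (by positivity)]
          apply ENNReal.ofReal_le_ofReal
          have he2 : (2:ℝ) ≤ Real.exp 1 := by
            have := Real.add_one_le_exp (1:ℝ); linarith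
          have hx : Real.exp (-1) ≤ 1/2 := by
            rw [Real.exp_neg]
            have h1 : (0:ℝ) < Real.exp 1 := Real.exp_pos 1
            have h2 : (Real.exp 1)⁻¹ * Real.exp 1 = 1 := inv_mul_cancel₀ h1.ne'
            nlinarith [inv_pos.2 h1]
          have hinv : (1 - Real.exp (-1))⁻¹ ≤ 2 := by
            have h3 : (0:ℝ) < 1 - Real.exp (-1) := hpos
            have h4 : (1 - Real.exp (-1))⁻¹ * (1 - Real.exp (-1)) = 1 := inv_mul_cancel₀ h3.ne'
            nlinarith [inv_pos.2 h3]
          have hnn : 0 ≤ Real.exp (2*lam*s₀) * c₁ := by positivity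
          calc Real.exp (2*lam*s₀) * c₁ * h * (1 - Real.exp (-1))⁻¹
              ≤ Real.exp (2*lam*s₀) * c₁ * h * 2 := by
                apply mul_le_mul_of_nonneg_left hinv (by positivity)
            _ = Real.exp (2*lam*s₀) * c₁ / lam := by rw [hh]; field_simp
  have hm : AEStronglyMeasurable (fun r : ℝ => Real.exp (2*lam*r)) (ν.restrict (Set.Ioc 0 s₀)) :=
    Continuous.aestronglyMeasurable (by continuity)
  rw [integral_eq_lintegral_of_nonneg_ae (Filter.Eventually.of_forall fun x => Real.exp_nonneg _) hm]
  exact ENNReal.toReal_le_of_le_ofReal (by positivity) hmain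

/-- Quadratic-variation bound for the martingale part
`K_t = (e^{-λ(t₀-s₀)} - 1) e^{-λs₀} ∫₀^t e^{λr} dM_r`. The quadratic variation
`⟨K⟩_{s₀} = (e^{-λ(t₀-s₀)}-1)² e^{-2λs₀} ∫₀^{s₀} e^{2λr} d⟨M⟩_r` is expressed via
the measure `ν = d⟨M⟩`, whose increments are dominated by `c₁ dt`. -/
theorem stmt5 (c₁ ε : ℝ) (hc₁ : 0 ≤ c₁) (hε : ε ∈ Set.Ioo (0:ℝ) 1) :
    ∃ c : ℝ, 0 < c ∧
      ∀ (lam : ℝ), 0 < lam →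
      ∀ (ν : Measure ℝ),
        (∀ s t : ℝ, 0 ≤ s → s ≤ t → ν (Set.Icc s t) ≤ ENNReal.ofReal (c₁ * (t - s))) →
      ∀ s₀ t₀ : ℝ, 0 ≤ s₀ → s₀ < t₀ →
        (Real.exp (-(lam * (t₀ - s₀))) - 1) ^ 2 * Real.exp (-(2 * lam * s₀)) *
            (∫ r in Set.Ioc (0:ℝ) s₀, Real.exp (2 * lam * r) ∂ν) ≤
          c₁ * min 1 (lam * (t₀ - s₀)) / lam ∧
        (Real.exp (-(lam * (t₀ - s₀))) - 1) ^ 2 * Real.exp (-(2 * lam * s₀)) *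
            (∫ r in Set.Ioc (0:ℝ) s₀, Real.exp (2 * lam * r) ∂ν) ≤
          c * c₁ * (t₀ - s₀) ^ ε / lam ^ (1 - ε) := by
  obtain ⟨hε0, hε1⟩ := hε
  refine ⟨1, one_pos, ?_⟩
  intro lam hlam ν hν s₀ t₀ hs₀ hst
  have hΔ : (0:ℝ) < t₀ - s₀ := by linarith
  set u : ℝ := lam * (t₀ - s₀) with hu
  have hupos : 0 < u := mul_pos hlam hΔ
  set I : ℝ := ∫ r in Set.Ioc (0:ℝ) s₀, Real.exp (2 * lam * r) ∂ν with hI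
  have hInn : 0 ≤ I := integral_nonneg fun r => Real.exp_nonneg _
  have hsq : (Real.exp (-(lam * (t₀ - s₀))) - 1) ^ 2 ≤ min 1 u := by
    have h1 : Real.exp (-u) ≤ 1 := Real.exp_le_one_iff.2 (by linarith)
    have h2 : 1 - u ≤ Real.exp (-u) := by nlinarith [Real.add_one_le_exp (-u)]
    have h3 : 0 < Real.exp (-u) := Real.exp_pos _
    rw [← hu]
    apply le_min
    · nlinarith
    · nlinarith
  have hB : Real.exp (-(2 * lam * s₀)) * I ≤ c₁ / lam := by
    have hIb := key_int c₁ lam s₀ hc₁ hlam hs₀ ν hν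
    have hexp : Real.exp (-(2 * lam * s₀)) * Real.exp (2 * lam * s₀) = 1 := by
      rw [← Real.exp_add]; simp
    calc Real.exp (-(2 * lam * s₀)) * I
        ≤ Real.exp (-(2 * lam * s₀)) * (Real.exp (2 * lam * s₀) * c₁ / lam) :=
          mul_le_mul_of_nonneg_left hIb (Real.exp_nonneg _)
      _ = c₁ / lam := by
          rw [mul_div_assoc' ]
          rw [show Real.exp (-(2 * lam * s₀)) * (Real.exp (2 * lam * s₀) * c₁) =
            (Real.exp (-(2 * lam * s₀)) * Real.exp (2 * lam * s₀)) * c₁ by ring, hexp, one_mul]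
  have key1 : (Real.exp (-(lam * (t₀ - s₀))) - 1) ^ 2 * Real.exp (-(2 * lam * s₀)) * I ≤
      c₁ * min 1 u / lam := by
    have hre : (Real.exp (-(lam * (t₀ - s₀))) - 1) ^ 2 * Real.exp (-(2 * lam * s₀)) * I =
        (Real.exp (-(lam * (t₀ - s₀))) - 1) ^ 2 * (Real.exp (-(2 * lam * s₀)) * I) := by ring
    rw [hre]
    have hmin0 : (0:ℝ) ≤ min 1 u := le_min zero_le_one hupos.le
    calc (Real.exp (-(lam * (t₀ - s₀))) - 1) ^ 2 * (Real.exp (-(2 * lam * s₀)) * I)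
        ≤ min 1 u * (c₁ / lam) := by
          apply mul_le_mul hsq hB (by positivity) hmin0
      _ = c₁ * min 1 u / lam := by ring
  refine ⟨key1, ?_⟩
  have hmin : min 1 u ≤ u ^ ε := by
    rcases le_total u 1 with h | h
    · calc min 1 u ≤ u := min_le_right _ _
        _ = u ^ (1:ℝ) := (Real.rpow_one u).symm
        _ ≤ u ^ ε := Real.rpow_le_rpow_of_exponent_ge hupos h hε1.le
    · calc min 1 u ≤ 1 := min_le_left _ _
        _ ≤ u ^ ε := Real.one_le_rpow h hε0.le
  have hupow : u ^ ε = lam ^ ε * (t₀ - s₀) ^ ε := Real.mul_rpow hlam.le hΔ.le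
  have hsplit : lam ^ (1 - ε) * lam ^ ε = lam := by
    rw [← Real.rpow_add hlam, show (1 - ε) + ε = 1 by ring, Real.rpow_one]
  have hlp : (0:ℝ) < lam ^ (1 - ε) := Real.rpow_pos_of_pos hlam _
  have heq : c₁ * (t₀ - s₀) ^ ε / lam ^ (1 - ε) = c₁ * (lam ^ ε * (t₀ - s₀) ^ ε) / lam := by
    rw [div_eq_div_iff hlp.ne' hlam.ne']
    linear_combination (-(c₁ * (t₀ - s₀) ^ ε)) * hsplit
  have step : c₁ * min 1 u / lam ≤ c₁ * (t₀ - s₀) ^ ε / lam ^ (1 - ε) := by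
    rw [heq, ← hupow]
    gcongr
  calc (Real.exp (-(lam * (t₀ - s₀))) - 1) ^ 2 * Real.exp (-(2 * lam * s₀)) * I
      ≤ c₁ * min 1 u / lam := key1
    _ ≤ c₁ * (t₀ - s₀) ^ ε / lam ^ (1 - ε) := step
    _ = 1 * c₁ * (t₀ - s₀) ^ ε / lam ^ (1 - ε) := by ring
end

section
/- Let (λ_i) be positive reals, γ > 0, and suppose b_k : H → [γ, γ^{-1}] are measurable. Define U^n(t) = ∑_{k=1}^n exp(-λ_k ∫₀^t b_k(X_r) dr) x₀(k) ε_k for a continuous H-valued path X and x₀ ∈ H. Then for s < t, |U^n(t) - U^n(s)|² ≤ ∑_k ((λ_k² γ^{-2} (t-s)²) ∧ 1) x₀(k)², uniformly in n; consequently for every ε > 0 there is δ > 0, independent of n and X, such that |t - s| < δ implies |U^n(t) - U^n(s)|² < 3ε, i.e. the family {U^n} is uniformly equicontinuous. -/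
open Real MeasureTheory RealInnerProductSpace

lemma exp_sub_exp_le {A B : ℝ} (hB : 0 ≤ B) (hAB : B ≤ A) :
    Real.exp (-A) - Real.exp (-B) ≤ 0 ∧ Real.exp (-B) - Real.exp (-A) ≤ min (A - B) 1 := by
  constructor
  · have := Real.exp_le_exp.2 (neg_le_neg hAB)
    linarith
  · refine le_min ?_ ?_
    · have h1 : Real.exp (-A) = Real.exp (-B) * Real.exp (B - A) := by
        rw [← Real.exp_add]; ring_nf
      have h2 : (B - A) + 1 ≤ Real.exp (B - A) := Real.add_one_le_exp _
      have h3 : Real.exp (-B) ≤ 1 := Real.exp_le_one_iff.2 (by linarith)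
      nlinarith [Real.exp_pos (-B), Real.exp_pos (B - A)]
    · have h3 : Real.exp (-B) ≤ 1 := Real.exp_le_one_iff.2 (by linarith)
      nlinarith [Real.exp_pos (-A)]

lemma abs_exp_sub_exp_le {A B : ℝ} (hA : 0 ≤ A) (hB : 0 ≤ B) :
    |Real.exp (-A) - Real.exp (-B)| ≤ min |A - B| 1 := by
  rcases le_total B A with h | h
  · obtain ⟨h1, h2⟩ := exp_sub_exp_le hB h
    rw [abs_of_nonpos h1, abs_of_nonneg (by linarith : (0:ℝ) ≤ A - B)]
    simpa using h2
  · obtain ⟨h1, h2⟩ := exp_sub_exp_le hA h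
    rw [abs_sub_comm, abs_sub_comm A B, abs_of_nonpos h1,
      abs_of_nonneg (by linarith : (0:ℝ) ≤ B - A)]
    simpa using h2


/-- `U^n(t) = ∑_{k<n} exp(-λ_k ∫₀^t b_k(X_r) dr) ⟨x₀,ε_k⟩ ε_k`. -/
noncomputable def Uproc {H : Type*} [NormedAddCommGroup H] [InnerProductSpace ℝ H]
    [CompleteSpace H] (e : HilbertBasis ℕ ℝ H) (lam : ℕ → ℝ) (b : ℕ → H → ℝ)
    (X : ℝ → H) (x₀ : H) (n : ℕ) (t : ℝ) : H :=
  ∑ k ∈ Finset.range n,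
    (Real.exp (-(lam k * ∫ r in (0:ℝ)..t, b k (X r))) * ⟪x₀, e k⟫) • e k

/-- Uniform equicontinuity of the family `{U^n}`: the quantitative increment bound
and the resulting `3ε` modulus, uniform in `n` and in the path `X`. -/
theorem stmt15 {H : Type*} [NormedAddCommGroup H] [InnerProductSpace ℝ H]
    [CompleteSpace H] [TopologicalSpace.SeparableSpace H] [MeasurableSpace H] [BorelSpace H]
    (e : HilbertBasis ℕ ℝ H) (lam : ℕ → ℝ) (γ : ℝ) (hγ : 0 < γ)
    (hlam : ∀ k, 0 < lam k)
    (b : ℕ → H → ℝ) (hbmeas : ∀ k, Measurable (b k))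
    (hb : ∀ k x, b k x ∈ Set.Icc γ γ⁻¹)
    (X : ℝ → H) (hX : Continuous X) (x₀ : H) :
    (∀ (n : ℕ) (s t : ℝ), 0 ≤ s → s ≤ t →
      ‖Uproc e lam b X x₀ n t - Uproc e lam b X x₀ n s‖ ^ 2 ≤
        ∑' k, min (lam k ^ 2 * γ⁻¹ ^ 2 * (t - s) ^ 2) 1 * ⟪x₀, e k⟫ ^ 2) ∧
    ∀ ε : ℝ, 0 < ε → ∃ δ : ℝ, 0 < δ ∧ ∀ (n : ℕ) (s t : ℝ), 0 ≤ s → s ≤ t →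
      t - s < δ → ‖Uproc e lam b X x₀ n t - Uproc e lam b X x₀ n s‖ ^ 2 < 3 * ε := by
  have hγi : 0 < γ⁻¹ := inv_pos.2 hγ
  set f : ℕ → ℝ := fun k => ⟪x₀, e k⟫ ^ 2 with hf
  have hf_nonneg : ∀ k, 0 ≤ f k := fun k => sq_nonneg _
  have hfsum : Summable f := by
    have := (e.orthonormal).inner_products_summable (x := x₀)
    simpa [hf, Real.norm_eq_abs, sq_abs, real_inner_comm] using this
  -- integrability
  have hmeasBX : ∀ k, Measurable fun r => b k (X r) := fun k =>
    (hbmeas k).comp hX.measurable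
  have hint : ∀ (k : ℕ) (u v : ℝ),
      IntervalIntegrable (fun r => b k (X r)) volume u v := by
    intro k u v
    rw [intervalIntegrable_iff]
    refine Integrable.mono' (g := fun _ => γ⁻¹)
      (integrableOn_const measure_Ioc_lt_top.ne)
      (hmeasBX k).aestronglyMeasurable ?_
    filter_upwards with r
    rw [Real.norm_eq_abs, abs_le]
    constructor
    · linarith [(hb k (X r)).1]
    · exact (hb k (X r)).2
  have hInonneg : ∀ (k : ℕ) (t : ℝ), 0 ≤ t → 0 ≤ ∫ r in (0:ℝ)..t, b k (X r) := by
    intro k t ht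
    exact intervalIntegral.integral_nonneg ht fun r _ => le_trans hγ.le (hb k (X r)).1
  -- quantitative bound, for fixed n s t
  have part1 : ∀ (n : ℕ) (s t : ℝ), 0 ≤ s → s ≤ t →
      ‖Uproc e lam b X x₀ n t - Uproc e lam b X x₀ n s‖ ^ 2 ≤
        ∑' k, min (lam k ^ 2 * γ⁻¹ ^ 2 * (t - s) ^ 2) 1 * f k := by
    intro n s t hs hst
    have ht : 0 ≤ t := hs.trans hst
    set g : ℕ → ℝ := fun k => min (lam k ^ 2 * γ⁻¹ ^ 2 * (t - s) ^ 2) 1 * f k with hg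
    have hg_nonneg : ∀ k, 0 ≤ g k := fun k =>
      mul_nonneg (le_min (by positivity) zero_le_one) (hf_nonneg k)
    have hg_le : ∀ k, g k ≤ f k := fun k =>
      mul_le_of_le_one_left (hf_nonneg k) (min_le_right _ _)
    have hgsum : Summable g := hfsum.of_nonneg_of_le hg_nonneg hg_le
    -- rewrite the difference
    set c : ℕ → ℝ := fun k =>
      (Real.exp (-(lam k * ∫ r in (0:ℝ)..t, b k (X r))) -
        Real.exp (-(lam k * ∫ r in (0:ℝ)..s, b k (X r)))) * ⟪x₀, e k⟫ with hc
    have hdiff : Uproc e lam b X x₀ n t - Uproc e lam b X x₀ n s =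
        ∑ k ∈ Finset.range n, c k • e k := by
      rw [Uproc, Uproc, ← Finset.sum_sub_distrib]
      refine Finset.sum_congr rfl fun k _ => ?_
      simp only [hc]
      rw [sub_mul, sub_smul]
    have hnorm : ‖Uproc e lam b X x₀ n t - Uproc e lam b X x₀ n s‖ ^ 2 =
        ∑ k ∈ Finset.range n, c k ^ 2 := by
      rw [hdiff, ← real_inner_self_eq_norm_sq,
        e.orthonormal.inner_sum c c (Finset.range n)]
      simp [sq]
    rw [hnorm]
    refine le_trans (Finset.sum_le_sum ?_) (Summable.sum_le_tsum _ (fun k _ => hg_nonneg k) hgsum)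
    intro k _
    -- bound c k ^ 2 ≤ g k
    have hkey : |Real.exp (-(lam k * ∫ r in (0:ℝ)..t, b k (X r))) -
        Real.exp (-(lam k * ∫ r in (0:ℝ)..s, b k (X r)))| ≤
        min (lam k * γ⁻¹ * (t - s)) 1 := by
      have h1 := abs_exp_sub_exp_le
        (mul_nonneg (hlam k).le (hInonneg k t ht))
        (mul_nonneg (hlam k).le (hInonneg k s hs))
      refine h1.trans (min_le_min ?_ le_rfl)
      have hdiffint : lam k * (∫ r in (0:ℝ)..t, b k (X r)) -
          lam k * (∫ r in (0:ℝ)..s, b k (X r)) =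
          lam k * ∫ r in s..t, b k (X r) := by
        rw [← mul_sub, intervalIntegral.integral_interval_sub_left (hint k 0 t) (hint k 0 s)]
      have hIle : ∫ r in s..t, b k (X r) ≤ γ⁻¹ * (t - s) := by
        have := intervalIntegral.integral_mono_on hst (hint k s t)
          (intervalIntegrable_const (c := γ⁻¹)) (fun r _ => (hb k (X r)).2)
        simpa [smul_eq_mul, mul_comm] using this
      have hI0 : 0 ≤ ∫ r in s..t, b k (X r) :=
        intervalIntegral.integral_nonneg hst fun r _ => le_trans hγ.le (hb k (X r)).1
      rw [hdiffint, abs_of_nonneg (mul_nonneg (hlam k).le hI0)]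
      calc lam k * ∫ r in s..t, b k (X r) ≤ lam k * (γ⁻¹ * (t - s)) :=
            mul_le_mul_of_nonneg_left hIle (hlam k).le
        _ = lam k * γ⁻¹ * (t - s) := by ring
    have habs : c k ^ 2 ≤ (min (lam k * γ⁻¹ * (t - s)) 1) ^ 2 * f k := by
      rw [hc, mul_pow, hf]
      refine mul_le_mul_of_nonneg_right ?_ (sq_nonneg _)
      rw [← sq_abs]
      exact pow_le_pow_left₀ (abs_nonneg _) hkey 2
    refine habs.trans ?_
    refine mul_le_mul_of_nonneg_right ?_ (hf_nonneg k)
    have hmn : 0 ≤ min (lam k * γ⁻¹ * (t - s)) 1 :=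
      le_min (mul_nonneg (mul_nonneg (hlam k).le hγi.le) (by linarith)) zero_le_one
    refine le_min ?_ ?_
    · calc (min (lam k * γ⁻¹ * (t - s)) 1) ^ 2 ≤ (lam k * γ⁻¹ * (t - s)) ^ 2 :=
            pow_le_pow_left₀ hmn (min_le_left _ _) 2
        _ = lam k ^ 2 * γ⁻¹ ^ 2 * (t - s) ^ 2 := by ring
    · calc (min (lam k * γ⁻¹ * (t - s)) 1) ^ 2 ≤ 1 ^ 2 :=
            pow_le_pow_left₀ hmn (min_le_right _ _) 2
        _ = 1 := one_pow 2
  refine ⟨part1, ?_⟩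
  intro ε hε
  -- choose tail cutoff N
  obtain ⟨N, hN⟩ : ∃ N, ∑' k, f (k + N) < ε := by
    have := tendsto_sum_nat_add f
    exact ((this.eventually (gt_mem_nhds hε)).exists)
  set D : ℝ := ∑ k ∈ Finset.range N, lam k ^ 2 * γ⁻¹ ^ 2 * f k with hD
  have hD0 : 0 ≤ D := Finset.sum_nonneg fun k _ => by positivity
  refine ⟨Real.sqrt (ε / (D + 1)), Real.sqrt_pos.2 (by positivity), ?_⟩
  intro n s t hs hst hts
  have hδsq : Real.sqrt (ε / (D + 1)) ^ 2 = ε / (D + 1) :=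
    Real.sq_sqrt (by positivity)
  refine lt_of_le_of_lt (part1 n s t hs hst) ?_
  set g : ℕ → ℝ := fun k => min (lam k ^ 2 * γ⁻¹ ^ 2 * (t - s) ^ 2) 1 * f k with hg
  have hg_nonneg : ∀ k, 0 ≤ g k := fun k =>
    mul_nonneg (le_min (by positivity) zero_le_one) (hf_nonneg k)
  have hg_le : ∀ k, g k ≤ f k := fun k =>
    mul_le_of_le_one_left (hf_nonneg k) (min_le_right _ _)
  have hgsum : Summable g := hfsum.of_nonneg_of_le hg_nonneg hg_le
  have hsplit : ∑' k, g k = ∑ k ∈ Finset.range N, g k + ∑' k, g (k + N) :=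
    (hgsum.sum_add_tsum_nat_add N).symm
  have htail : ∑' k, g (k + N) ≤ ∑' k, f (k + N) :=
    Summable.tsum_le_tsum (fun k => hg_le _) ((summable_nat_add_iff N).2 hgsum)
      ((summable_nat_add_iff N).2 hfsum)
  have hts2 : (t - s) ^ 2 ≤ Real.sqrt (ε / (D + 1)) ^ 2 :=
    pow_le_pow_left₀ (by linarith) hts.le 2
  have hhead : ∑ k ∈ Finset.range N, g k < ε := by
    have h1 : ∑ k ∈ Finset.range N, g k ≤ (ε / (D + 1)) * D := by
      rw [hD, Finset.mul_sum]
      refine Finset.sum_le_sum fun k _ => ?_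
      rw [hg]
      calc min (lam k ^ 2 * γ⁻¹ ^ 2 * (t - s) ^ 2) 1 * f k ≤
            lam k ^ 2 * γ⁻¹ ^ 2 * (t - s) ^ 2 * f k :=
            mul_le_mul_of_nonneg_right (min_le_left _ _) (hf_nonneg k)
        _ ≤ lam k ^ 2 * γ⁻¹ ^ 2 * (ε / (D + 1)) * f k := by
            rw [← hδsq]
            refine mul_le_mul_of_nonneg_right ?_ (hf_nonneg k)
            refine mul_le_mul_of_nonneg_left hts2 (by positivity)
        _ = ε / (D + 1) * (lam k ^ 2 * γ⁻¹ ^ 2 * f k) := by ring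
    have h2 : (ε / (D + 1)) * D < ε := by
      rw [div_mul_eq_mul_div, div_lt_iff₀ (by positivity : (0:ℝ) < D + 1)]
      nlinarith
    linarith
  calc ∑' k, g k = ∑ k ∈ Finset.range N, g k + ∑' k, g (k + N) := hsplit
    _ < ε + ε := add_lt_add_of_lt_of_le hhead (htail.trans hN.le)
    _ < 3 * ε := by linarith
end
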